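/- Let h(a, b) = (1/2)‖u b ᵀ + a vᵀ‖_Γ² − Σ_{l>1} (aᵀΓu_l)(bᵀv_l), where ‖M‖_Γ² = Tr(MᵀΓM), u = u₁, v = v₁, with {u_l} Γ-orthonormal scaled so uᵀ_lΓu_l = d_l, {v_l} orthogonal with ‖v_l‖² = 1, and d₁ > d₂ > … > d_r > 0. Then h(a, b) ≥ 0 for all a ∈ ℝ^p, b ∈ ℝ^q with bᵀv₁ = 0. -/

import Mathlib

open Matrix Finset


lemma dotProduct_sum' {p n : ℕ} (x : Fin p → ℝ) (f : Fin n → Fin p → ℝ) :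
    x ⬝ᵥ (∑ i, f i) = ∑ i, x ⬝ᵥ f i := by
  simp only [dotProduct, Finset.sum_apply, Finset.mul_sum]
  exact Finset.sum_comm

lemma sum_dotProduct' {p n : ℕ} (x : Fin p → ℝ) (f : Fin n → Fin p → ℝ) :
    (∑ i, f i) ⬝ᵥ x = ∑ i, f i ⬝ᵥ x := by
  simp only [dotProduct, Finset.sum_apply, Finset.sum_mul]
  exact Finset.sum_comm

lemma mulVec_sum' {p n : ℕ} (Γ : Matrix (Fin p) (Fin p) ℝ) (f : Fin n → Fin p → ℝ) :
    Γ *ᵥ (∑ i, f i) = ∑ i, Γ *ᵥ f i := by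
  ext j
  simp only [Matrix.mulVec, dotProduct, Finset.sum_apply, Finset.mul_sum]
  exact Finset.sum_comm

lemma bessel_aux {p n : ℕ} (Γ : Matrix (Fin p) (Fin p) ℝ) (hsym : Γᵀ = Γ) (hpsd : Γ.PosSemidef)
    (u : Fin n → Fin p → ℝ) (d : Fin n → ℝ) (hd : ∀ i, 0 < d i)
    (horth : ∀ i j, u i ⬝ᵥ (Γ *ᵥ u j) = if i = j then d i else 0)
    (a : Fin p → ℝ) :
    ∑ i, (a ⬝ᵥ (Γ *ᵥ u i))^2 / d i ≤ a ⬝ᵥ (Γ *ᵥ a) := by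
  have hsymm : ∀ x y : Fin p → ℝ, x ⬝ᵥ (Γ *ᵥ y) = y ⬝ᵥ (Γ *ᵥ x) := fun x y => by
    rw [Matrix.dotProduct_mulVec, ← Matrix.mulVec_transpose, hsym, dotProduct_comm]
  set c : Fin n → ℝ := fun i => (a ⬝ᵥ (Γ *ᵥ u i)) / d i with hc
  set s : Fin p → ℝ := ∑ i, c i • u i with hs
  have h0 : 0 ≤ (a - s) ⬝ᵥ (Γ *ᵥ (a - s)) := by
    have := hpsd.dotProduct_mulVec_nonneg (a - s)
    simpa using this
  have hGs : Γ *ᵥ s = ∑ i, c i • (Γ *ᵥ u i) := by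
    rw [hs, mulVec_sum']
    exact Finset.sum_congr rfl fun i _ => by rw [Matrix.mulVec_smul]
  have haGs : a ⬝ᵥ (Γ *ᵥ s) = ∑ i, (a ⬝ᵥ (Γ *ᵥ u i))^2 / d i := by
    rw [hGs, dotProduct_sum']
    refine Finset.sum_congr rfl fun i _ => ?_
    rw [dotProduct_smul, hc]
    have := (hd i).ne'
    field_simp
    rw [smul_eq_mul, div_mul_eq_mul_div, mul_div_assoc', mul_div_cancel_left₀ _ this, sq]
  have hsGs : s ⬝ᵥ (Γ *ᵥ s) = ∑ i, (a ⬝ᵥ (Γ *ᵥ u i))^2 / d i := by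
    rw [hGs, hs, sum_dotProduct']
    refine Finset.sum_congr rfl fun i _ => ?_
    rw [smul_dotProduct, dotProduct_sum']
    simp only [dotProduct_smul, horth, smul_eq_mul, mul_ite, mul_zero,
      Finset.sum_ite_eq, Finset.mem_univ, if_true, hc]
    have := (hd i).ne'
    field_simp
  have hsGa : s ⬝ᵥ (Γ *ᵥ a) = ∑ i, (a ⬝ᵥ (Γ *ᵥ u i))^2 / d i := by
    rw [hsymm s a, haGs]
  have expand : (a - s) ⬝ᵥ (Γ *ᵥ (a - s))
      = a ⬝ᵥ (Γ *ᵥ a) - ∑ i, (a ⬝ᵥ (Γ *ᵥ u i))^2 / d i := by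
    rw [Matrix.mulVec_sub, sub_dotProduct, dotProduct_sub, dotProduct_sub,
      haGs, hsGa, hsGs]
    ring
  linarith [expand ▸ h0]

lemma trace_vmv {p q : ℕ} (Γ : Matrix (Fin p) (Fin p) ℝ)
    (x z : Fin p → ℝ) (y w : Fin q → ℝ) :
    Matrix.trace ((vecMulVec x y)ᵀ * Γ * (vecMulVec z w))
      = (x ⬝ᵥ (Γ *ᵥ z)) * (y ⬝ᵥ w) := by
  simp only [Matrix.trace, Matrix.diag_apply, Matrix.mul_apply, Matrix.vecMulVec_apply,
    Matrix.transpose_apply, Matrix.mulVec, dotProduct, Finset.sum_mul, Finset.mul_sum]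
  refine Finset.sum_congr rfl fun j _ => ?_
  rw [Finset.sum_comm]
  exact Finset.sum_congr rfl fun i _ => Finset.sum_congr rfl fun k _ => by ring

/-- Positive semidefiniteness of the quadratic form arising in the `T₁₂` term of the
√n-consistency proof: with Γ-orthogonal `{u_l}` scaled so `u_lᵀΓu_l = d_l`, orthonormal
`{v_l}`, and strictly decreasing positive singular values `d₁ > … > d_r > 0`, the function
`h(a, b) = (1/2)‖u₁bᵀ + av₁ᵀ‖_Γ² − Σ_{l>1}(aᵀΓu_l)(bᵀv_l)` is nonnegative whenever
`bᵀv₁ = 0`, where `‖M‖_Γ² = Tr(MᵀΓM)`. -/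
theorem T12_quadratic_form_nonneg {p q r : ℕ}
    (Γ : Matrix (Fin p) (Fin p) ℝ) (hΓsymm : Γᵀ = Γ) (hΓpd : Γ.PosDef)
    (u : Fin (r + 1) → Fin p → ℝ) (v : Fin (r + 1) → Fin q → ℝ)
    (d : Fin (r + 1) → ℝ)
    (huorth : ∀ i j, u i ⬝ᵥ (Γ *ᵥ u j) = if i = j then d i else 0)
    (hvorth : ∀ i j, v i ⬝ᵥ v j = if i = j then 1 else 0)
    (hd_anti : StrictAnti d) (hd_pos : ∀ i, 0 < d i)
    (a : Fin p → ℝ) (b : Fin q → ℝ) (hb : b ⬝ᵥ v 0 = 0) :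
    0 ≤ (1 / 2) * Matrix.trace ((vecMulVec (u 0) b + vecMulVec a (v 0))ᵀ * Γ
          * (vecMulVec (u 0) b + vecMulVec a (v 0)))
        - ∑ l ∈ Finset.univ.erase 0, (a ⬝ᵥ (Γ *ᵥ u l)) * (b ⬝ᵥ v l) := by
  -- trace simplification
  have hT : Matrix.trace ((vecMulVec (u 0) b + vecMulVec a (v 0))ᵀ * Γ
          * (vecMulVec (u 0) b + vecMulVec a (v 0)))
      = d 0 * (b ⬝ᵥ b) + a ⬝ᵥ (Γ *ᵥ a) := by
    simp only [Matrix.transpose_add, Matrix.add_mul, Matrix.mul_add, Matrix.trace_add,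
      trace_vmv]
    rw [huorth 0 0, hvorth 0 0, hb, dotProduct_comm (v 0) b, hb]
    simp
  -- Bessel inequality for a
  have hA : ∑ l ∈ Finset.univ.erase 0, (a ⬝ᵥ (Γ *ᵥ u l))^2 / d l ≤ a ⬝ᵥ (Γ *ᵥ a) := by
    refine le_trans ?_ (bessel_aux Γ hΓsymm hΓpd.posSemidef u d hd_pos huorth a)
    exact Finset.sum_le_sum_of_subset_of_nonneg (Finset.subset_univ _)
      (fun i _ _ => div_nonneg (sq_nonneg _) (hd_pos i).le)
  -- Bessel inequality for b
  have hB : ∑ l ∈ Finset.univ.erase 0, (b ⬝ᵥ v l)^2 ≤ b ⬝ᵥ b := by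
    have h := bessel_aux (1 : Matrix (Fin q) (Fin q) ℝ) Matrix.transpose_one
      Matrix.PosSemidef.one v (fun _ => 1) (fun _ => one_pos)
      (fun i j => by rw [Matrix.one_mulVec]; exact hvorth i j) b
    simp only [Matrix.one_mulVec, div_one] at h
    refine le_trans ?_ h
    exact Finset.sum_le_sum_of_subset_of_nonneg (Finset.subset_univ _)
      (fun i _ _ => sq_nonneg _)
  -- per-term bound
  have hterm : ∀ l ∈ Finset.univ.erase 0, (a ⬝ᵥ (Γ *ᵥ u l)) * (b ⬝ᵥ v l)
      ≤ (1/2) * (d 0 * (b ⬝ᵥ v l)^2) + (1/2) * ((a ⬝ᵥ (Γ *ᵥ u l))^2 / d l) := by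
    intro l hl
    have hl0 : l ≠ 0 := Finset.ne_of_mem_erase hl
    have hlt : d l < d 0 := hd_anti (Fin.pos_of_ne_zero hl0)
    have hdl := hd_pos l
    have hD := hd_pos 0
    set α := a ⬝ᵥ (Γ *ᵥ u l)
    set β := b ⬝ᵥ v l
    have h1 : α^2 / d 0 ≤ α^2 / d l :=
      div_le_div_of_nonneg_left (sq_nonneg _) hdl hlt.le
    have h2 : α^2 / d 0 * d 0 = α^2 := div_mul_cancel₀ _ hD.ne'
    nlinarith [sq_nonneg (α - d 0 * β), hD]
  have hsum := Finset.sum_le_sum hterm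
  rw [Finset.sum_add_distrib, ← Finset.mul_sum, ← Finset.mul_sum, ← Finset.mul_sum] at hsum
  rw [hT]
  have hd0 := hd_pos 0
  nlinarith [hsum, hA, hB, hd0]
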